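/- For u, v > 0, define ψ(u,v) = v/LW₀(v/u) + v·ln(v/LW₀(v/u)) − (u + v). Then for all u, v > 0, the second partial derivative of ψ with respect to v exists and equals ∂²ψ/∂v²(u,v) = LW₀(v/u)/(v·(LW₀(v/u) + 1)); equivalently, writing t = LW₀(v/u) and s = v/t, one has ∂²ψ/∂v² = 1/(s·(t+1)). -/

import Mathlib

/-- The principal branch of the Lambert W function on the nonnegative reals:
for `z ≥ 0`, `LW0 z` is the unique `w ≥ 0` with `w·exp w = z`. -/
noncomputable def LW0 (z : ℝ) : ℝ :=
  Function.invFunOn (fun w => w * Real.exp w) (Set.Ici 0) z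

/-- The phase function `ψ(u,v) = v/LW₀(v/u) + v·ln(v/LW₀(v/u)) − (u + v)`. -/
noncomputable def psi (u v : ℝ) : ℝ :=
  v / LW0 (v / u) + v * Real.log (v / LW0 (v / u)) - (u + v)


/-!
On `v > 0` put `t = LW₀(v/u)`. The defining relation `t·eᵗ = v/u` gives `v/t = u·eᵗ` and
`ln(v/t) = ln u + t`, so `ψ(u,v) = u·eᵗ + v·(ln u + t) − (u + v)`. Differentiating, with
`dt/dv = t/(v(t+1))` from the inverse function theorem, the terms containing `dt/dv` add up to `1`
and `∂ψ/∂v = ln u + LW₀(v/u)`. Differentiating once more gives `∂²ψ/∂v² = dt/dv`.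
-/

open Real Set Filter Topology

lemma strictMonoOn_mul_exp : StrictMonoOn (fun w : ℝ => w * exp w) (Ici 0) := by
  intro a ha b hb hab
  have hexp : exp a ≤ exp b := exp_le_exp.2 hab.le
  simp only [mem_Ici] at ha hb
  nlinarith [exp_pos b]

lemma exists_mul_exp_eq {z : ℝ} (hz : 0 ≤ z) : ∃ w ∈ Ici (0 : ℝ), w * exp w = z := by
  have hz_mem : z ∈ Icc ((fun w : ℝ => w * exp w) 0) ((fun w : ℝ => w * exp w) z) :=
    ⟨by simpa using hz, by nlinarith [one_le_exp hz]⟩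
  obtain ⟨w, hw, hwz⟩ :=
    intermediate_value_Icc hz (continuous_id.mul continuous_exp).continuousOn hz_mem
  exact ⟨w, hw.1, hwz⟩

lemma LW0_nonneg {z : ℝ} (hz : 0 ≤ z) : 0 ≤ LW0 z :=
  Function.invFunOn_mem (exists_mul_exp_eq hz)

lemma LW0_mul_exp_self {z : ℝ} (hz : 0 ≤ z) : LW0 z * exp (LW0 z) = z :=
  Function.invFunOn_eq (exists_mul_exp_eq hz)

lemma LW0_mul_exp {w : ℝ} (hw : 0 ≤ w) : LW0 (w * exp w) = w := by
  have hww : 0 ≤ w * exp w := by positivity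
  exact strictMonoOn_mul_exp.injOn (LW0_nonneg hww) hw (LW0_mul_exp_self hww)

lemma LW0_pos {z : ℝ} (hz : 0 < z) : 0 < LW0 z := by
  refine (LW0_nonneg hz.le).lt_of_ne fun h => hz.ne ?_
  rw [← LW0_mul_exp_self hz.le, ← h, zero_mul]

lemma strictMonoOn_LW0 : StrictMonoOn LW0 (Ici 0) := by
  intro a ha b hb hab
  have hmono := strictMonoOn_mul_exp.le_iff_le (LW0_nonneg hb) (LW0_nonneg ha)
  simp only [LW0_mul_exp_self ha, LW0_mul_exp_self hb] at hmono
  exact not_le.1 fun h => hab.not_ge (hmono.2 h)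

lemma LW0_image_Ioi : LW0 '' Ioi 0 = Ioi 0 := by
  refine Subset.antisymm (image_subset_iff.2 fun z hz => LW0_pos hz) fun w (hw : 0 < w) => ?_
  exact ⟨w * exp w, mul_pos hw (exp_pos w), LW0_mul_exp hw.le⟩

lemma continuousAt_LW0 {z : ℝ} (hz : 0 < z) : ContinuousAt LW0 z :=
  (strictMonoOn_LW0.mono Ioi_subset_Ici_self).continuousAt_of_image_mem_nhds
    (Ioi_mem_nhds hz) (by rw [LW0_image_Ioi]; exact Ioi_mem_nhds (LW0_pos hz))

lemma hasDerivAt_LW0 {z : ℝ} (hz : 0 < z) :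
    HasDerivAt LW0 (LW0 z / (z * (LW0 z + 1))) z := by
  have hleft_inv : ∀ᶠ y in 𝓝 z, LW0 y * exp (LW0 y) = y := by
    filter_upwards [Ioi_mem_nhds hz] with y hy using LW0_mul_exp_self (le_of_lt hy)
  have hW := continuousAt_LW0 hz
  obtain ⟨t, ht, rfl⟩ : ∃ t > 0, t * exp t = z := ⟨LW0 z, LW0_pos hz, LW0_mul_exp_self hz.le⟩
  have hf : HasDerivAt (fun w => w * exp w) ((t + 1) * exp t) (LW0 (t * exp t)) := by
    rw [LW0_mul_exp ht.le]
    exact ((hasDerivAt_id' t).mul (hasDerivAt_exp t)).congr_deriv (by ring)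
  refine (hf.of_local_left_inverse hW (by positivity) hleft_inv).congr_deriv ?_
  rw [LW0_mul_exp ht.le]
  field_simp

lemma hasDerivAt_LW0_div {u v : ℝ} (hu : 0 < u) (hv : 0 < v) :
    HasDerivAt (fun v' => LW0 (v' / u)) (LW0 (v / u) / (v * (LW0 (v / u) + 1))) v := by
  have hvu : 0 < v / u := div_pos hv hu
  refine ((hasDerivAt_LW0 hvu).comp v ((hasDerivAt_id v).div_const u)).congr_deriv ?_
  field_simp

lemma div_LW0_div_eq {u v : ℝ} (hu : 0 < u) (hv : 0 < v) :
    v / LW0 (v / u) = u * exp (LW0 (v / u)) := by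
  have hvu : 0 < v / u := div_pos hv hu
  rw [div_eq_iff (LW0_pos hvu).ne', mul_assoc, mul_comm (exp _), LW0_mul_exp_self hvu.le,
    mul_div_cancel₀ v hu.ne']

lemma psi_eq_of_pos {u v : ℝ} (hu : 0 < u) (hv : 0 < v) :
    psi u v = u * exp (LW0 (v / u)) + v * (log u + LW0 (v / u)) - (u + v) := by
  rw [psi, div_LW0_div_eq hu hv, log_mul hu.ne' (exp_ne_zero _), log_exp]

lemma hasDerivAt_psi {u v : ℝ} (hu : 0 < u) (hv : 0 < v) :
    HasDerivAt (psi u) (log u + LW0 (v / u)) v := by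
  have hpsi : (fun v' => u * exp (LW0 (v' / u)) + v' * (log u + LW0 (v' / u)) - (u + v'))
      =ᶠ[𝓝 v] psi u := by
    filter_upwards [Ioi_mem_nhds hv] with v' hv' using (psi_eq_of_pos hu hv').symm
  have ht : 0 < LW0 (v / u) := LW0_pos (div_pos hv hu)
  have hW := hasDerivAt_LW0_div hu hv
  refine HasDerivAt.congr_of_eventuallyEq ?_ hpsi.symm
  refine (((hW.exp.const_mul u).add ((hasDerivAt_id' v).mul (hW.const_add (log u)))).sub
    ((hasDerivAt_id' v).const_add u)).congr_deriv ?_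
  rw [← mul_assoc, ← div_LW0_div_eq hu hv]
  field_simp
  ring

/-- The second partial derivative of `ψ` in `v` is `LW₀(v/u)/(v·(LW₀(v/u)+1))`;
equivalently, with `t = LW₀(v/u)` and `s = v/t`, it equals `1/(s·(t+1))`. -/
theorem psi_second_partial_v (u v : ℝ) (hu : 0 < u) (hv : 0 < v) :
    HasDerivAt (fun v' => deriv (fun v'' => psi u v'') v')
      (LW0 (v / u) / (v * (LW0 (v / u) + 1))) v ∧
    LW0 (v / u) / (v * (LW0 (v / u) + 1)) =
      1 / ((v / LW0 (v / u)) * (LW0 (v / u) + 1)) := by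
  have ht : 0 < LW0 (v / u) := LW0_pos (div_pos hv hu)
  constructor
  · have hderiv : (fun v' => log u + LW0 (v' / u)) =ᶠ[𝓝 v] deriv (psi u) := by
      filter_upwards [Ioi_mem_nhds hv] with v' hv' using (hasDerivAt_psi hu hv').deriv.symm
    exact ((hasDerivAt_LW0_div hu hv).const_add (log u)).congr_of_eventuallyEq hderiv.symm
  · field_simp
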